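/- One-to-one operational correspondence between the CK machine and its HOcore translation: if C -> C' in the CK machine, then [[C]] --tau--> [[C']]; and if [[C]] --tau--> P, then there exists a CK configuration C' such that P = [[C']]. -/

import Mathlib

/-! ### HOcore: syntax, LTS, barbs, barbed bisimilarity -/

/-- Channel names of HOcore. -/
abbrev Name := ℕ

/-- HOcore processes, with de Bruijn indices for process variables. -/
inductive Proc : Type
  | nil : Proc
  | pvar : ℕ → Proc
  | par : Proc → Proc → Proc
  | inp : Name → Proc → Proc
  | out : Name → Proc → Proc
  deriving DecidableEq

namespace Proc

/-- Shift the free de Bruijn indices `≥ k` by `d`. -/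
def lift (d : ℕ) : ℕ → Proc → Proc
  | _, nil => nil
  | k, pvar n => if n < k then pvar n else pvar (n + d)
  | k, par P Q => par (lift d k P) (lift d k Q)
  | k, inp a P => inp a (lift d (k + 1) P)
  | k, out a P => out a (lift d k P)

/-- Capture-avoiding substitution of `S` for the de Bruijn index `k` in `P`. -/
def subst : Proc → ℕ → Proc → Proc
  | nil, _, _ => nil
  | pvar n, k, S => if n = k then lift k 0 S else if k < n then pvar (n - 1) else pvar n
  | par P Q, k, S => par (subst P k S) (subst Q k S)
  | inp a P, k, S => inp a (subst P (k + 1) S)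
  | out a P, k, S => out a (subst P k S)

/-- Free channel names of a process. -/
def fnames : Proc → Finset Name
  | nil => ∅
  | pvar _ => ∅
  | par P Q => fnames P ∪ fnames Q
  | inp a P => insert a (fnames P)
  | out a P => insert a (fnames P)

end Proc

/-- Labels of the HOcore LTS: internal step, output, input. -/
inductive Label
  | tau : Label
  | outl : Name → Proc → Label
  | inl : Name → Proc → Label

/-- Structural congruence: parallel composition is associative, commutative,
and has `nil` as a neutral element. -/
inductive SCong : Proc → Proc → Prop
  | refl (P) : SCong P P
  | symm {P Q} : SCong P Q → SCong Q P
  | trans {P Q R} : SCong P Q → SCong Q R → SCong P R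
  | parComm (P Q) : SCong (.par P Q) (.par Q P)
  | parAssoc (P Q R) : SCong (.par (.par P Q) R) (.par P (.par Q R))
  | parNil (P) : SCong (.par P .nil) P
  | parCong {P P' Q Q'} : SCong P P' → SCong Q Q' → SCong (.par P Q) (.par P' Q')
  | inpCong {P P'} (a) : SCong P P' → SCong (.inp a P) (.inp a P')
  | outCong {P P'} (a) : SCong P P' → SCong (.out a P) (.out a P')

/-- The labeled transition system of HOcore (processes are considered up to
structural congruence). -/
inductive Step : Proc → Label → Proc → Prop
  | outS (a P) : Step (.out a P) (.outl a P) .nil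
  | inpS (a Q P) : Step (.inp a Q) (.inl a P) (Q.subst 0 P)
  | parL {P l P'} (Q) : Step P l P' → Step (.par P Q) l (.par P' Q)
  | parR {Q l Q'} (P) : Step Q l Q' → Step (.par P Q) l (.par P Q')
  | comm1 {P Q P' Q' a R} : Step P (.outl a R) P' → Step Q (.inl a R) Q' →
      Step (.par P Q) .tau (.par P' Q')
  | comm2 {P Q P' Q' a R} : Step P (.inl a R) P' → Step Q (.outl a R) Q' →
      Step (.par P Q) .tau (.par P' Q')
  | struct {P P' l Q Q'} : SCong P P' → Step P' l Q' → SCong Q' Q → Step P l Q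

/-- One internal step. -/
def TauStep (P Q : Proc) : Prop := Step P Label.tau Q

/-- Weak internal transition `==tau==>`. -/
def WTau : Proc → Proc → Prop := Relation.ReflTransGen TauStep

/-- Observables: input on a name, or output on a name (a coname). -/
inductive Barb
  | inb : Name → Barb
  | outb : Name → Barb
  deriving DecidableEq

/-- Strong observable action w.r.t. a set `H` of hidden names. -/
def StrongBarb (H : Set Name) (P : Proc) : Barb → Prop
  | .inb a => a ∉ H ∧ ∃ Q R, Step P (Label.inl a Q) R
  | .outb a => a ∉ H ∧ ∃ Q R, Step P (Label.outl a Q) R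

/-- Weak observable action w.r.t. a set `H` of hidden names. -/
def WeakBarb (H : Set Name) (P : Proc) (α : Barb) : Prop :=
  ∃ P', WTau P P' ∧ StrongBarb H P' α

/-- Barbed bisimulation w.r.t. the hidden names `H`. -/
def IsBarbedBisim (H : Set Name) (R : Proc → Proc → Prop) : Prop :=
  Symmetric R ∧ ∀ P Q, R P Q →
    (∀ α, StrongBarb H P α → WeakBarb H Q α) ∧
    (∀ S : Proc, ((S.fnames : Set Name) ∩ H = ∅) → R (.par P S) (.par Q S)) ∧
    (∀ P', Step P Label.tau P' → ∃ Q', WTau Q Q' ∧ R P' Q')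

/-- Barbed equivalence w.r.t. the hidden names `H`. -/
def BarbedEquiv (H : Set Name) (P Q : Proc) : Prop :=
  ∃ R, IsBarbedBisim H R ∧ R P Q
/-! ### The call-by-value lambda-calculus (closed) and the CK machine -/

/-- Call-by-value lambda-terms with de Bruijn indices. -/
inductive CTm
  | bvar : ℕ → CTm
  | lam : CTm → CTm
  | app : CTm → CTm → CTm
  deriving DecidableEq

namespace CTm

/-- Shift the de Bruijn indices `≥ k` by `d`. -/
def liftC (d : ℕ) : ℕ → CTm → CTm
  | k, bvar n => if n < k then bvar n else bvar (n + d)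
  | k, lam t => lam (liftC d (k + 1) t)
  | k, app t s => app (liftC d k t) (liftC d k s)

/-- Capture-avoiding substitution of `s` for the de Bruijn index `k`. -/
def substC : CTm → ℕ → CTm → CTm
  | bvar n, k, s => if n = k then liftC k 0 s else if k < n then bvar (n - 1) else bvar n
  | lam t, k, s => lam (substC t (k + 1) s)
  | app t u, k, s => app (substC t k s) (substC u k s)

/-- All de Bruijn indices point below `k`. -/
def ClosedUnder : ℕ → CTm → Prop
  | k, bvar n => n < k
  | k, lam t => ClosedUnder (k + 1) t
  | k, app t s => ClosedUnder k t ∧ ClosedUnder k s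

end CTm

/-- Values: variables and lambda-abstractions. -/
def CIsVal : CTm → Prop
  | .app _ _ => False
  | _ => True

/-- Stack items: an argument `arg(t)` or an already evaluated function `fun(v)`. -/
inductive CItem
  | argI : CTm → CItem
  | funI : CTm → CItem

/-- Stacks of the CK machine. -/
abbrev CStack := List CItem

/-- Configurations of the CK machine: evaluation mode `<t | π>` and
continuation mode `<π | v>`. -/
inductive CKConf
  | ev : CTm → CStack → CKConf
  | cont : CStack → CTm → CKConf

/-- Transitions of the CK machine. -/
inductive CKStep : CKConf → CKConf → Prop
  | fn {t s π} : CKStep (.ev (.app t s) π) (.ev t (.argI s :: π))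
  | switch {v π} : CIsVal v → CKStep (.ev v π) (.cont π v)
  | arg {t π v} : CKStep (.cont (.argI t :: π) v) (.ev t (.funI v :: π))
  | beta {t π v} : CKStep (.cont (.funI (.lam t) :: π) v) (.ev (t.substC 0 v) π)

def CItemClosed : CItem → Prop
  | .argI t => CTm.ClosedUnder 0 t
  | .funI v => CTm.ClosedUnder 0 v ∧ CIsVal v

def CStackClosed (π : CStack) : Prop := ∀ i ∈ π, CItemClosed i

/-- Closed CK configurations. -/
def CKClosed : CKConf → Prop
  | .ev t π => CTm.ClosedUnder 0 t ∧ CStackClosed π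
  | .cont π v => CStackClosed π ∧ CTm.ClosedUnder 0 v ∧ CIsVal v

/-! ### Translation of the CK machine into HOcore -/

def cN : Name := 0
def valN : Name := 1
def bN : Name := 2

/-- `Fun(P, Q) = P || c!<Q>`. -/
def FunP (P Q : Proc) : Proc := .par P (.out cN Q)

/-- `Arg(P, Q) = val(x).(P || c!<Fun(x, Q)>)`. -/
def ArgP (P Q : Proc) : Proc :=
  .inp valN (.par (P.lift 1 0) (.out cN (FunP (.pvar 0) (Q.lift 1 0))))

/-- Translation `[[t]]` of terms. -/
def trC : CTm → Proc
  | .bvar n => .inp cN (.par (.pvar 0) (.out valN (.pvar (n + 1))))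
  | .lam t => .inp cN (.par (.pvar 0) (.out valN ((Proc.inp valN (trC t)).lift 1 0)))
  | .app t s =>
      .inp cN (.par ((trC t).lift 1 0) (.out cN (ArgP ((trC s).lift 1 0) (.pvar 0))))

/-- Translation `(v)` of values. -/
def trV : CTm → Proc
  | .bvar n => .pvar n
  | .lam t => .inp valN (trC t)
  | .app _ _ => .nil

/-- Translation of CK stacks. -/
def trSt : CStack → Proc
  | [] => .out bN .nil
  | .argI t :: π => ArgP (trC t) (trSt π)
  | .funI v :: π => FunP (trV v) (trSt π)

/-- Translation of CK configurations. -/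
def trCK : CKConf → Proc
  | .ev t π => .par (trC t) (.out cN (trSt π))
  | .cont π v => .par (trSt π) (.out valN (trV v))

/-!
Each CK transition is simulated by a single communication, on `c` for Fun and Switch and on
`val` for Arg and Beta; for Beta the reduct is `[[t[v/x]]]` because the translation commutes with
substitution of closed values, `[[t]][(v)/x] = [[t[v/x]]]`. Conversely, `[[C]]` is a parallel
composition of at most three prefixes that admits at most one synchronisation.

Inversion of `Step` is blocked by its `struct` rule, so transitions are analysed in the
syntax-directed fragment `SynStep`. Structural congruence is a bisimulation for `SynStep` (output
payloads being compared up to `≡`), hence every `Step` is a `SynStep` followed by `≡`.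
-/

namespace Proc

@[simp] theorem lift_zero (P : Proc) (k : ℕ) : P.lift 0 k = P := by
  induction P generalizing k <;> simp [lift, *]

@[simp] theorem subst_lift (S P : Proc) (k : ℕ) : (P.lift 1 k).subst k S = P := by
  induction P generalizing k with
  | pvar n => grind [lift, subst]
  | _ => simp [lift, subst, *]

theorem lift_lift_comm (d : ℕ) (P : Proc) {m j : ℕ} (hm : m ≤ j) :
    (P.lift 1 m).lift d (j + 1) = (P.lift d j).lift 1 m := by
  induction P generalizing m j with
  | pvar n => grind [lift]
  | inp a P ih => simp [lift, ih (Nat.succ_le_succ hm)]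
  | _ => simp [lift, *]

@[simp] theorem subst_one_lift_lift (S P : Proc) :
    ((P.lift 1 0).lift 1 0).subst 1 S = P.lift 1 0 := by
  rw [← lift_lift_comm 1 P le_rfl, subst_lift]

end Proc

theorem SCong.lift {P Q : Proc} (h : SCong P Q) (d k : ℕ) : SCong (P.lift d k) (Q.lift d k) := by
  induction h generalizing k with
  | parNil P => simpa [Proc.lift] using SCong.parNil (P.lift d k)
  | inpCong a _ ih => exact .inpCong a (ih (k + 1))
  | refl => exact .refl _
  | symm _ ih => exact (ih k).symm
  | trans _ _ ih₁ ih₂ => exact (ih₁ k).trans (ih₂ k)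
  | parComm => exact .parComm _ _
  | parAssoc => exact .parAssoc _ _ _
  | parCong _ _ ih₁ ih₂ => exact .parCong (ih₁ k) (ih₂ k)
  | outCong a _ ih => exact .outCong a (ih k)

theorem SCong.subst {P Q : Proc} (h : SCong P Q) (k : ℕ) (S : Proc) :
    SCong (P.subst k S) (Q.subst k S) := by
  induction h generalizing k with
  | parNil P => simpa [Proc.subst] using SCong.parNil (P.subst k S)
  | inpCong a _ ih => exact .inpCong a (ih (k + 1))
  | refl => exact .refl _
  | symm _ ih => exact (ih k).symm
  | trans _ _ ih₁ ih₂ => exact (ih₁ k).trans (ih₂ k)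
  | parComm => exact .parComm _ _
  | parAssoc => exact .parAssoc _ _ _
  | parCong _ _ ih₁ ih₂ => exact .parCong (ih₁ k) (ih₂ k)
  | outCong a _ ih => exact .outCong a (ih k)

theorem Proc.subst_scong (P : Proc) {S S' : Proc} (h : SCong S S') (k : ℕ) :
    SCong (P.subst k S) (P.subst k S') := by
  induction P generalizing k with
  | pvar n =>
    simp only [Proc.subst]
    split_ifs
    · exact h.lift k 0
    all_goals exact .refl _
  | nil => exact .refl _
  | par _ _ ih₁ ih₂ => exact .parCong (ih₁ k) (ih₂ k)
  | inp a _ ih => exact .inpCong a (ih (k + 1))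
  | out a _ ih => exact .outCong a (ih k)

inductive SynStep : Proc → Label → Proc → Prop
  | outS (a P) : SynStep (.out a P) (.outl a P) .nil
  | inpS (a Q P) : SynStep (.inp a Q) (.inl a P) (Q.subst 0 P)
  | parL {P l P'} (Q) : SynStep P l P' → SynStep (.par P Q) l (.par P' Q)
  | parR {Q l Q'} (P) : SynStep Q l Q' → SynStep (.par P Q) l (.par P Q')
  | comm1 {P Q P' Q' a R} : SynStep P (.outl a R) P' → SynStep Q (.inl a R) Q' →
      SynStep (.par P Q) .tau (.par P' Q')
  | comm2 {P Q P' Q' a R} : SynStep P (.inl a R) P' → SynStep Q (.outl a R) Q' →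
      SynStep (.par P Q) .tau (.par P' Q')

inductive LabelCong : Label → Label → Prop
  | tau : LabelCong .tau .tau
  | outl {a R R'} : SCong R R' → LabelCong (.outl a R) (.outl a R')
  | inl {a R R'} : SCong R R' → LabelCong (.inl a R) (.inl a R')

theorem LabelCong.refl : ∀ l, LabelCong l l
  | .tau => .tau
  | .outl _ _ => .outl (.refl _)
  | .inl _ _ => .inl (.refl _)

theorem LabelCong.trans : ∀ {l₁ l₂ l₃}, LabelCong l₁ l₂ → LabelCong l₂ l₃ → LabelCong l₁ l₃
  | _, _, _, .tau, .tau => .tau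
  | _, _, _, .outl h, .outl h' => .outl (h.trans h')
  | _, _, _, .inl h, .inl h' => .inl (h.trans h')

namespace SynStep

theorem toStep {P l Q} (h : SynStep P l Q) : Step P l Q := by
  induction h with
  | outS a P => exact .outS a P
  | inpS a Q P => exact .inpS a Q P
  | parL Q _ ih => exact .parL Q ih
  | parR P _ ih => exact .parR P ih
  | comm1 _ _ ih₁ ih₂ => exact .comm1 ih₁ ih₂
  | comm2 _ _ ih₁ ih₂ => exact .comm2 ih₁ ih₂

theorem inl_scong {P P₁ a R R'} (h : SynStep P (.inl a R) P₁) (hR : SCong R R') :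
    ∃ P₁', SynStep P (.inl a R') P₁' ∧ SCong P₁ P₁' := by
  induction P generalizing P₁ with
  | inp b B => cases h; exact ⟨_, .inpS _ _ _, B.subst_scong hR 0⟩
  | par P Q ihP ihQ =>
    cases h with
    | parL _ h =>
      obtain ⟨P₁', h', hP⟩ := ihP h
      exact ⟨_, .parL Q h', .parCong hP (.refl _)⟩
    | parR _ h =>
      obtain ⟨Q₁', h', hQ⟩ := ihQ h
      exact ⟨_, .parR P h', .parCong (.refl _) hQ⟩
  | _ => cases h

end SynStep

def SynSim (P Q : Proc) : Prop :=
  ∀ l P', SynStep P l P' → ∃ l' Q', LabelCong l l' ∧ SynStep Q l' Q' ∧ SCong P' Q'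

namespace SynSim

theorem refl (P : Proc) : SynSim P P :=
  fun l P' h => ⟨l, P', .refl l, h, .refl _⟩

theorem trans {P Q R} (h₁ : SynSim P Q) (h₂ : SynSim Q R) : SynSim P R := by
  intro l P' h
  obtain ⟨l', Q', hl, hQ, hPQ⟩ := h₁ l P' h
  obtain ⟨l'', R', hl', hR, hQR⟩ := h₂ l' Q' hQ
  exact ⟨l'', R', hl.trans hl', hR, hPQ.trans hQR⟩

theorem par_comm (P Q : Proc) : SynSim (.par P Q) (.par Q P) := by
  intro l X h
  cases h with
  | parL _ h => exact ⟨l, _, .refl l, .parR _ h, .parComm _ _⟩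
  | parR _ h => exact ⟨l, _, .refl l, .parL _ h, .parComm _ _⟩
  | comm1 h₁ h₂ => exact ⟨_, _, .tau, .comm2 h₂ h₁, .parComm _ _⟩
  | comm2 h₁ h₂ => exact ⟨_, _, .tau, .comm1 h₂ h₁, .parComm _ _⟩

theorem par_assoc (P Q R : Proc) : SynSim (.par (.par P Q) R) (.par P (.par Q R)) := by
  intro l X h
  cases h with
  | parL _ h =>
    cases h with
    | parL _ h => exact ⟨l, _, .refl l, .parL _ h, .parAssoc _ _ _⟩
    | parR _ h => exact ⟨l, _, .refl l, .parR _ (.parL _ h), .parAssoc _ _ _⟩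
    | comm1 h₁ h₂ => exact ⟨_, _, .tau, .comm1 h₁ (.parL _ h₂), .parAssoc _ _ _⟩
    | comm2 h₁ h₂ => exact ⟨_, _, .tau, .comm2 h₁ (.parL _ h₂), .parAssoc _ _ _⟩
  | parR _ h => exact ⟨l, _, .refl l, .parR _ (.parR _ h), .parAssoc _ _ _⟩
  | comm1 h₁ h₂ =>
    cases h₁ with
    | parL _ h => exact ⟨_, _, .tau, .comm1 h (.parR _ h₂), .parAssoc _ _ _⟩
    | parR _ h => exact ⟨_, _, .tau, .parR _ (.comm1 h h₂), .parAssoc _ _ _⟩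
  | comm2 h₁ h₂ =>
    cases h₁ with
    | parL _ h => exact ⟨_, _, .tau, .comm2 h (.parR _ h₂), .parAssoc _ _ _⟩
    | parR _ h => exact ⟨_, _, .tau, .parR _ (.comm2 h h₂), .parAssoc _ _ _⟩

theorem par_assoc_symm (P Q R : Proc) : SynSim (.par P (.par Q R)) (.par (.par P Q) R) := by
  intro l X h
  cases h with
  | parL _ h => exact ⟨l, _, .refl l, .parL _ (.parL _ h), (SCong.parAssoc _ _ _).symm⟩
  | parR _ h =>
    cases h with
    | parL _ h => exact ⟨l, _, .refl l, .parL _ (.parR _ h), (SCong.parAssoc _ _ _).symm⟩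
    | parR _ h => exact ⟨l, _, .refl l, .parR _ h, (SCong.parAssoc _ _ _).symm⟩
    | comm1 h₁ h₂ => exact ⟨_, _, .tau, .comm1 (.parR _ h₁) h₂, (SCong.parAssoc _ _ _).symm⟩
    | comm2 h₁ h₂ => exact ⟨_, _, .tau, .comm2 (.parR _ h₁) h₂, (SCong.parAssoc _ _ _).symm⟩
  | comm1 h₁ h₂ =>
    cases h₂ with
    | parL _ h => exact ⟨_, _, .tau, .parL _ (.comm1 h₁ h), (SCong.parAssoc _ _ _).symm⟩
    | parR _ h => exact ⟨_, _, .tau, .comm1 (.parL _ h₁) h, (SCong.parAssoc _ _ _).symm⟩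
  | comm2 h₁ h₂ =>
    cases h₂ with
    | parL _ h => exact ⟨_, _, .tau, .parL _ (.comm2 h₁ h), (SCong.parAssoc _ _ _).symm⟩
    | parR _ h => exact ⟨_, _, .tau, .comm2 (.parL _ h₁) h, (SCong.parAssoc _ _ _).symm⟩

theorem par_nil (P : Proc) : SynSim (.par P .nil) P := by
  intro l X h
  cases h with
  | parL _ h => exact ⟨l, _, .refl l, h, .parNil _⟩
  | parR _ h | comm1 _ h | comm2 _ h => cases h

theorem par_nil_symm (P : Proc) : SynSim P (.par P .nil) :=
  fun l _ h => ⟨l, _, .refl l, .parL _ h, (SCong.parNil _).symm⟩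

theorem par {P P' Q Q'} (hP : SCong P P') (hQ : SCong Q Q') (simP : SynSim P P')
    (simQ : SynSim Q Q') : SynSim (.par P Q) (.par P' Q') := by
  intro l X h
  cases h with
  | parL _ h =>
    obtain ⟨l', P₁, hl, h', hP₁⟩ := simP _ _ h
    exact ⟨l', _, hl, .parL _ h', .parCong hP₁ hQ⟩
  | parR _ h =>
    obtain ⟨l', Q₁, hl, h', hQ₁⟩ := simQ _ _ h
    exact ⟨l', _, hl, .parR _ h', .parCong hP hQ₁⟩
  | comm1 h₁ h₂ =>
    obtain ⟨_, P₁, _ | hR₁ | hR₁, h₁', hP₁⟩ := simP _ _ h₁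
    obtain ⟨_, Q₁, _ | hR₂ | hR₂, h₂', hQ₁⟩ := simQ _ _ h₂
    obtain ⟨Q₂, h₂'', hQ₂⟩ := h₂'.inl_scong (hR₂.symm.trans hR₁)
    exact ⟨_, _, .tau, .comm1 h₁' h₂'', .parCong hP₁ (hQ₁.trans hQ₂)⟩
  | comm2 h₁ h₂ =>
    obtain ⟨_, P₁, _ | hR₁ | hR₁, h₁', hP₁⟩ := simP _ _ h₁
    obtain ⟨_, Q₁, _ | hR₂ | hR₂, h₂', hQ₁⟩ := simQ _ _ h₂
    obtain ⟨P₂, h₁'', hP₂⟩ := h₁'.inl_scong (hR₁.symm.trans hR₂)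
    exact ⟨_, _, .tau, .comm2 h₁'' h₂', .parCong (hP₁.trans hP₂) hQ₁⟩

theorem inp {B B'} (a : Name) (h : SCong B B') : SynSim (.inp a B) (.inp a B') := by
  rintro l X ⟨⟩
  exact ⟨_, _, .refl _, .inpS a B' _, h.subst 0 _⟩

theorem out {B B'} (a : Name) (h : SCong B B') : SynSim (.out a B) (.out a B') := by
  rintro l X ⟨⟩
  exact ⟨_, _, .outl h, .outS a B', .refl _⟩

end SynSim

theorem SCong.synSim {P Q} (h : SCong P Q) : SynSim P Q := by
  suffices ∀ {P Q}, SCong P Q → SynSim P Q ∧ SynSim Q P from (this h).1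
  intro P Q h
  induction h with
  | refl P => exact ⟨.refl P, .refl P⟩
  | symm _ ih => exact ⟨ih.2, ih.1⟩
  | trans _ _ ih₁ ih₂ => exact ⟨ih₁.1.trans ih₂.1, ih₂.2.trans ih₁.2⟩
  | parComm P Q => exact ⟨.par_comm P Q, .par_comm Q P⟩
  | parAssoc P Q R => exact ⟨.par_assoc P Q R, .par_assoc_symm P Q R⟩
  | parNil P => exact ⟨.par_nil P, .par_nil_symm P⟩
  | parCong h₁ h₂ ih₁ ih₂ => exact ⟨.par h₁ h₂ ih₁.1 ih₂.1, .par h₁.symm h₂.symm ih₁.2 ih₂.2⟩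
  | inpCong a h => exact ⟨.inp a h, .inp a h.symm⟩
  | outCong a h => exact ⟨.out a h, .out a h.symm⟩

theorem Step.exists_synStep {P l Q} (h : Step P l Q) :
    ∃ l' Q₀, LabelCong l l' ∧ SynStep P l' Q₀ ∧ SCong Q₀ Q := by
  induction h with
  | outS a P => exact ⟨_, _, .refl _, .outS a P, .refl _⟩
  | inpS a Q P => exact ⟨_, _, .refl _, .inpS a Q P, .refl _⟩
  | parL Q _ ih =>
    obtain ⟨l', P₀, hl, h, hP₀⟩ := ih
    exact ⟨l', _, hl, .parL Q h, .parCong hP₀ (.refl _)⟩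
  | parR P _ ih =>
    obtain ⟨l', Q₀, hl, h, hQ₀⟩ := ih
    exact ⟨l', _, hl, .parR P h, .parCong (.refl _) hQ₀⟩
  | comm1 _ _ ih₁ ih₂ =>
    obtain ⟨_, P₀, _ | hR₁ | hR₁, h₁, hP₀⟩ := ih₁
    obtain ⟨_, Q₀, _ | hR₂ | hR₂, h₂, hQ₀⟩ := ih₂
    obtain ⟨Q₁, h₂', hQ₁⟩ := h₂.inl_scong (hR₂.symm.trans hR₁)
    exact ⟨_, _, .tau, .comm1 h₁ h₂', .parCong hP₀ (hQ₁.symm.trans hQ₀)⟩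
  | comm2 _ _ ih₁ ih₂ =>
    obtain ⟨_, P₀, _ | hR₁ | hR₁, h₁, hP₀⟩ := ih₁
    obtain ⟨_, Q₀, _ | hR₂ | hR₂, h₂, hQ₀⟩ := ih₂
    obtain ⟨P₁, h₁', hP₁⟩ := h₁.inl_scong (hR₁.symm.trans hR₂)
    exact ⟨_, _, .tau, .comm2 h₁' h₂, .parCong (hP₁.symm.trans hP₀) hQ₀⟩
  | struct hP _ hQ ih =>
    obtain ⟨l', Q₀, hl, h, hQ₀⟩ := ih
    obtain ⟨l'', Q₁, hl', h', hQ₁⟩ := hP.symm.synSim _ _ h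
    exact ⟨l'', Q₁, hl.trans hl', h', (hQ₁.symm.trans hQ₀).trans hQ⟩

theorem Step.exists_synStep_tau {P Q} (h : Step P .tau Q) :
    ∃ Q₀, SynStep P .tau Q₀ ∧ SCong Q₀ Q := by
  obtain ⟨_, Q₀, ⟨⟩, h₀, hQ₀⟩ := h.exists_synStep
  exact ⟨Q₀, h₀, hQ₀⟩

theorem CTm.liftC_of_closedUnder {t : CTm} {k j : ℕ} (d : ℕ) (ht : t.ClosedUnder k) (hkj : k ≤ j) :
    t.liftC d j = t := by
  induction t generalizing k j with
  | bvar n => simp only [ClosedUnder] at ht; simp [liftC, show n < j by omega]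
  | lam t ih => simp [liftC, ih ht (Nat.succ_le_succ hkj)]
  | app t s iht ihs => simp [liftC, iht ht.1 hkj, ihs ht.2 hkj]

theorem lift_trC (d : ℕ) (t : CTm) (j : ℕ) : (trC t).lift d j = trC (t.liftC d j) := by
  induction t generalizing j with
  | bvar n => grind [trC, CTm.liftC, Proc.lift]
  | lam t ih =>
    simp only [trC, Proc.lift, CTm.liftC, Nat.zero_add]
    rw [Proc.lift_lift_comm d _ (Nat.le_add_left 1 j), ih]
    simp
  | app t s iht ihs =>
    simp only [trC, Proc.lift, CTm.liftC, ArgP, FunP]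
    rw [Proc.lift_lift_comm d (trC t) (Nat.zero_le _),
      Proc.lift_lift_comm d ((trC s).lift 1 0) (Nat.zero_le _),
      Proc.lift_lift_comm d (trC s) (Nat.zero_le _), iht, ihs]
    simp [Proc.lift]

theorem lift_trV (d : ℕ) (v : CTm) (j : ℕ) : (trV v).lift d j = trV (v.liftC d j) := by
  cases v with
  | bvar n => by_cases h : n < j <;> simp [trV, CTm.liftC, Proc.lift, h]
  | lam t => simp [trV, CTm.liftC, Proc.lift, lift_trC]
  | app t s => simp [trV, CTm.liftC, Proc.lift]

theorem lift_trV_of_closedUnder {v : CTm} (hv : v.ClosedUnder 0) (d j : ℕ) :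
    (trV v).lift d j = trV v := by
  rw [lift_trV, CTm.liftC_of_closedUnder d hv (Nat.zero_le _)]

theorem Proc.subst_succ_lift {S : Proc} (hS : ∀ d m, S.lift d m = S) (P : Proc) {j k : ℕ}
    (hjk : j ≤ k) : (P.lift 1 j).subst (k + 1) S = (P.subst k S).lift 1 j := by
  induction P generalizing j k with
  | pvar n => grind [lift, subst]
  | inp a P ih => simp [lift, subst, ih (Nat.succ_le_succ hjk)]
  | _ => simp [lift, subst, *]

theorem trC_of_isVal {v : CTm} (hv : CIsVal v) :
    trC v = .inp cN (.par (.pvar 0) (.out valN ((trV v).lift 1 0))) := by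
  cases v with
  | bvar n => simp [trC, trV, Proc.lift]
  | lam t => rfl
  | app t s => exact hv.elim

theorem trC_substC {v : CTm} (hv : CIsVal v) (hc : v.ClosedUnder 0) (t : CTm) (k : ℕ) :
    (trC t).subst k (trV v) = trC (t.substC k v) := by
  have hS := lift_trV_of_closedUnder hc
  induction t generalizing k with
  | bvar n =>
    by_cases hnk : n = k
    · subst hnk
      simp [CTm.substC, CTm.liftC_of_closedUnder n hc (Nat.zero_le _), trC_of_isVal hv, trC,
        Proc.subst, hS]
    · grind [trC, Proc.subst, CTm.substC]
  | lam t ih =>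
    simp only [trC, Proc.subst, CTm.substC, Proc.lift, Nat.zero_add]
    rw [Proc.subst_succ_lift hS (trC t) (Nat.le_add_left 1 k), ih]
    simp
  | app t s iht ihs =>
    simp only [trC, Proc.subst, CTm.substC, ArgP, FunP, Proc.lift]
    rw [Proc.subst_succ_lift hS (trC t) (Nat.zero_le _),
      Proc.subst_succ_lift hS ((trC s).lift 1 0) (Nat.zero_le _),
      Proc.subst_succ_lift hS (trC s) (Nat.zero_le _), iht, ihs]
    simp [Proc.subst]

namespace SynStep

theorem tau_inp_out {a B S Q} (hQ : B.subst 0 S = Q) :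
    SynStep (.par (.inp a B) (.out a S)) .tau (.par Q .nil) :=
  hQ ▸ .comm2 (.inpS a B S) (.outS a S)

theorem eq_of_tau_inp_out {a b B S Q} (h : SynStep (.par (.inp a B) (.out b S)) .tau Q) :
    Q = .par (B.subst 0 S) .nil := by
  cases h with
  | parL _ h | parR _ h | comm1 h => cases h
  | comm2 h₁ h₂ => cases h₁; cases h₂; rfl

theorem not_tau_out_out {a b P R Q} : ¬ SynStep (.par (.out a P) (.out b R)) .tau Q := by
  intro h
  cases h with
  | parL _ h | parR _ h | comm1 _ h | comm2 h => cases h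

theorem eq_of_tau_inp_out_out {a b c B S V Q} (hab : a ≠ b)
    (h : SynStep (.par (.par (.inp a B) (.out b S)) (.out c V)) .tau Q) :
    Q = .par (.par (B.subst 0 V) (.out b S)) .nil := by
  cases h with
  | parL _ h =>
    cases h with
    | parL _ h | parR _ h | comm1 h => cases h
    | comm2 h₁ h₂ => cases h₁; cases h₂; exact absurd rfl hab
  | parR _ h | comm1 _ h => cases h
  | comm2 h₁ h₂ =>
    cases h₂
    cases h₁ with
    | parL _ h => cases h; rfl
    | parR _ h => cases h

theorem tau_inp_out_unique {a b B S Q₁ Q₂} (h₁ : SynStep (.par (.inp a B) (.out b S)) .tau Q₁)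
    (h₂ : SynStep (.par (.inp a B) (.out b S)) .tau Q₂) : Q₁ = Q₂ :=
  h₁.eq_of_tau_inp_out.trans h₂.eq_of_tau_inp_out.symm

theorem tau_inp_out_out_unique {a b c B S V Q₁ Q₂} (hab : a ≠ b)
    (h₁ : SynStep (.par (.par (.inp a B) (.out b S)) (.out c V)) .tau Q₁)
    (h₂ : SynStep (.par (.par (.inp a B) (.out b S)) (.out c V)) .tau Q₂) : Q₁ = Q₂ :=
  (h₁.eq_of_tau_inp_out_out hab).trans (h₂.eq_of_tau_inp_out_out hab).symm

end SynStep

theorem synStep_trCK_of_ckStep {C C'} (hc : CKClosed C) (h : CKStep C C') :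
    SynStep (trCK C) .tau (.par (trCK C') .nil) := by
  cases h with
  | fn => exact .tau_inp_out (by simp [trCK, trSt, ArgP, FunP, Proc.subst, Proc.lift])
  | switch hv =>
    rw [trCK, trC_of_isVal hv]
    exact .tau_inp_out (by simp [trCK, Proc.subst])
  | arg => exact .tau_inp_out (by simp [trCK, trSt, FunP, Proc.subst])
  | @beta t π v =>
    rw [trCK, trCK, ← trC_substC hc.2.2 hc.2.1]
    exact .comm2 (.parL _ (.inpS valN (trC t) (trV v))) (.outS valN (trV v))

/-- `[[C]]` has at most one `tau`-step, so it is the simulation of the CK step from `C`,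
which exists whenever `[[C]]` can move. -/
theorem exists_ckStep_of_synStep_trCK {C Q} (hc : CKClosed C) (h : SynStep (trCK C) .tau Q) :
    ∃ C', CKStep C C' ∧ Q = .par (trCK C') .nil := by
  match C, hc, h with
  | .ev (.bvar n) π, hc, _ => exact absurd hc.1 (Nat.not_lt_zero n)
  | .ev (.lam t) π, hc, h =>
    exact ⟨_, .switch trivial, h.tau_inp_out_unique (synStep_trCK_of_ckStep hc (.switch trivial))⟩
  | .ev (.app t s) π, hc, h => exact ⟨_, .fn, h.tau_inp_out_unique (synStep_trCK_of_ckStep hc .fn)⟩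
  | .cont [] v, _, h => exact (SynStep.not_tau_out_out h).elim
  | .cont (.argI t :: π) v, hc, h =>
    exact ⟨_, .arg, h.tau_inp_out_unique (synStep_trCK_of_ckStep hc .arg)⟩
  | .cont (.funI (.lam t) :: π) v, hc, h =>
    exact ⟨_, .beta, h.tau_inp_out_out_unique (by decide) (synStep_trCK_of_ckStep hc .beta)⟩
  | .cont (.funI (.bvar n) :: π) v, hc, _ =>
    exact absurd (hc.1 _ List.mem_cons_self).1 (Nat.not_lt_zero n)
  | .cont (.funI (.app _ _) :: π) v, hc, _ => exact (hc.1 _ List.mem_cons_self).2.elim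

theorem trCK_step_of_ckStep {C C'} (hc : CKClosed C) (h : CKStep C C') :
    Step (trCK C) .tau (trCK C') :=
  .struct (.refl _) (synStep_trCK_of_ckStep hc h).toStep (.parNil _)

theorem exists_ckStep_of_step_trCK {C P} (hc : CKClosed C) (h : Step (trCK C) .tau P) :
    ∃ C', CKStep C C' ∧ SCong P (trCK C') := by
  obtain ⟨Q, hQ, hQP⟩ := h.exists_synStep_tau
  obtain ⟨C', hC', rfl⟩ := exists_ckStep_of_synStep_trCK hc hQ
  exact ⟨C', hC', hQP.symm.trans (.parNil _)⟩

/-- If `C -> C'` in the CK machine then `[[C]] --tau--> [[C']]`, and every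
`tau`-transition of `[[C]]` reaches the translation of a configuration
(up to structural congruence). -/
theorem ck_operational_correspondence :
    (∀ C C' : CKConf, CKClosed C → CKStep C C' → Step (trCK C) Label.tau (trCK C')) ∧
    (∀ (C : CKConf) (P : Proc), CKClosed C → Step (trCK C) Label.tau P →
      ∃ C' : CKConf, SCong P (trCK C')) :=
  ⟨fun _ _ ↦ trCK_step_of_ckStep,
    fun _ _ hc h ↦ (exists_ckStep_of_step_trCK hc h).imp fun _ ↦ And.right⟩
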